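/- Let K be an infinite compact Hausdorff space whose weight w(K) is a strong limit cardinal. Then the closed unit ball of C(K) contains a 2-equilateral set of cardinality w(K). -/

import Mathlib

/-!
If `D` is dense in a regular space, the regular open sets `interior (closure A)` with `A ⊆ D`
form a base, so `w(K) ≤ 2 ^ |D|`. When `w(K)` is a strong limit, no set of fewer than `w(K)`
points is dense, and a transfinite recursion of length `w(K)` produces a left-separated
sequence: `x i ∉ closure {x j | j < i}`. Urysohn functions `g i` of norm `≤ 1` with
`g i (x i) = 1` and `g i = -1` on the earlier points then satisfy `(g i - g j) (x j) = -2`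
for `j < i`.
-/

open Cardinal

/-- The weight of a topological space: the minimal infinite cardinality of a
base for its topology. -/
noncomputable def weight (X : Type u) [TopologicalSpace X] : Cardinal.{u} :=
  ⨅ B : {B : Set (Set X) // TopologicalSpace.IsTopologicalBasis B}, max #B.1 ℵ₀

open Set TopologicalSpace

section Weight

variable {X : Type u} [TopologicalSpace X]

lemma weight_le_max_mk {B : Set (Set X)} (hB : IsTopologicalBasis B) : weight X ≤ max #B ℵ₀ :=
  ciInf_le' (fun B : {B : Set (Set X) // IsTopologicalBasis B} => max #B.1 ℵ₀) ⟨B, hB⟩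

lemma isTopologicalBasis_interior_closure_of_dense [RegularSpace X] {D : Set X} (hD : Dense D) :
    IsTopologicalBasis ((fun A : Set X ↦ interior (closure A)) '' 𝒫 D) := by
  refine isTopologicalBasis_of_isOpen_of_nhds (by rintro _ ⟨A, -, rfl⟩; exact isOpen_interior) ?_
  intro a u hau hu
  obtain ⟨t, ht, htc, htu⟩ := exists_mem_nhds_isClosed_subset (hu.mem_nhds hau)
  refine ⟨interior (closure (interior t ∩ D)), ⟨_, inter_subset_right, rfl⟩, ?_, ?_⟩
  · exact interior_maximal (hD.open_subset_closure_inter isOpen_interior) isOpen_interior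
      (mem_interior_iff_mem_nhds.mpr ht)
  · calc interior (closure (interior t ∩ D)) ⊆ closure t :=
          interior_subset.trans (closure_mono (inter_subset_left.trans interior_subset))
      _ = t := htc.closure_eq
      _ ⊆ u := htu

lemma weight_le_max_two_pow_of_dense [RegularSpace X] {D : Set X} (hD : Dense D) :
    weight X ≤ max (2 ^ #D) ℵ₀ := by
  refine (weight_le_max_mk (isTopologicalBasis_interior_closure_of_dense hD)).trans ?_
  gcongr
  exact mk_image_le.trans (mk_powerset D).le

lemma not_dense_of_mk_lt_weight [RegularSpace X] [T1Space X] [Infinite X]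
    (hsl : ∀ lam < weight X, (2 : Cardinal.{u}) ^ lam < weight X) {S : Set X}
    (hS : #S < weight X) : ¬ Dense S := by
  intro hD
  rcases S.finite_or_infinite with hfin | hinf
  · have : S = Set.univ := by rw [← hfin.isClosed.closure_eq, hD.closure_eq]
    exact infinite_univ (this ▸ hfin)
  · have h2S : max (2 ^ #S) ℵ₀ = 2 ^ #S :=
      max_eq_left ((infinite_iff.mp hinf.to_subtype).trans (cantor _).le)
    have := weight_le_max_two_pow_of_dense hD
    rw [h2S] at this
    exact this.not_gt (hsl _ hS)

end Weight

lemma exists_forall_notMem_closure_image_Iio {X ι : Type u} [TopologicalSpace X]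
    [LinearOrder ι] [WellFoundedLT ι] {κ : Cardinal.{u}} (hι : ∀ i : ι, #(Iio i) < κ)
    (hX : ∀ S : Set X, #S < κ → ¬ Dense S) :
    ∃ x : ι → X, ∀ i, x i ∉ closure (x '' Iio i) := by
  have hpick : ∀ S : Set X, #S < κ → ∃ y, y ∉ closure S := fun S hS ↦ not_forall.mp (hX S hS)
  choose pick hpick using hpick
  let step (i : ι) (prev : ∀ j, j < i → X) : X :=
    pick (range fun j : Iio i ↦ prev j j.2) (mk_range_le.trans_lt (hι i))
  let x : ι → X := wellFounded_lt.fix step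
  refine ⟨x, fun i ↦ ?_⟩
  rw [image_eq_range, show x i = step i (fun j _ ↦ x j) from wellFounded_lt.fix_eq step i]
  exact hpick _ _

section ContinuousMap

variable {K : Type*} [TopologicalSpace K] [CompactSpace K]

lemma exists_norm_le_one_apply_eq_one_eqOn_neg_one [NormalSpace K] [T1Space K] {C : Set K}
    (hC : IsClosed C) {y : K} (hy : y ∉ C) :
    ∃ g : C(K, ℝ), ‖g‖ ≤ 1 ∧ g y = 1 ∧ EqOn g (-1) C := by
  obtain ⟨f, hfC, hfy, hf⟩ := exists_bounded_mem_Icc_of_closed_of_le hC isClosed_singleton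
    (disjoint_singleton_right.mpr hy) (show (-1 : ℝ) ≤ 1 by norm_num)
  refine ⟨f.toContinuousMap, ?_, hfy rfl, fun z hz ↦ hfC hz⟩
  exact (ContinuousMap.norm_le _ zero_le_one).mpr fun z ↦ abs_le.mpr (hf z)

lemma norm_sub_eq_two_of_apply_eq {f g : C(K, ℝ)} (hf : ‖f‖ ≤ 1) (hg : ‖g‖ ≤ 1) {p : K}
    (hfp : f p = 1) (hgp : g p = -1) : ‖f - g‖ = 2 := by
  refine le_antisymm ((norm_sub_le f g).trans (by linarith)) ?_
  calc (2 : ℝ) = ‖(f - g) p‖ := by simp [hfp, hgp]; norm_num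
    _ ≤ ‖f - g‖ := (f - g).norm_coe_le_norm p

end ContinuousMap

lemma pairwise_norm_sub_eq_of_forall_lt {E ι : Type*} [SeminormedAddCommGroup E] [LinearOrder ι]
    {g : ι → E} {r : ℝ} (h : ∀ i j, i < j → ‖g i - g j‖ = r) :
    Pairwise fun i j ↦ ‖g i - g j‖ = r := by
  intro i j hij
  rcases hij.lt_or_gt with hlt | hgt
  · exact h i j hlt
  · rw [norm_sub_rev]; exact h j i hgt

/-- If `w(K)` is a strong limit cardinal, then the closed unit ball of `C(K)` contains a
`2`-equilateral set of cardinality `w(K)`. -/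
theorem statement14 (K : Type u) [TopologicalSpace K] [CompactSpace K] [T2Space K] [Infinite K]
    (hsl : ∀ lam < weight K, (2 : Cardinal.{u}) ^ lam < weight K) :
    ∃ A : Set C(K, ℝ), A ⊆ Metric.closedBall 0 1 ∧ #A = weight K ∧
      ∀ f ∈ A, ∀ g ∈ A, f ≠ g → ‖f - g‖ = 2 := by
  obtain ⟨x, hx⟩ := exists_forall_notMem_closure_image_Iio (ι := (weight K).ord.ToType)
    (fun i ↦ by simpa using mk_Iio_lt i (by simp)) (fun _ hS ↦ not_dense_of_mk_lt_weight hsl hS)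
  choose g hg_norm hg_one hg_neg using
    fun i ↦ exists_norm_le_one_apply_eq_one_eqOn_neg_one isClosed_closure (hx i)
  have hpair : Pairwise fun i j ↦ ‖g i - g j‖ = 2 := pairwise_norm_sub_eq_of_forall_lt
    fun i j hij ↦ norm_sub_eq_two_of_apply_eq (hg_norm i) (hg_norm j) (hg_one i)
      (hg_neg j (subset_closure (mem_image_of_mem x hij)))
  have hg_inj : Function.Injective g := fun i j hij ↦ by
    by_contra hne
    simpa [hij] using hpair hne
  refine ⟨range g, ?_, ?_, ?_⟩
  · rintro _ ⟨i, rfl⟩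
    simpa using hg_norm i
  · rw [mk_range_eq g hg_inj, mk_ord_toType]
  · rintro _ ⟨i, rfl⟩ _ ⟨j, rfl⟩ hne
    exact hpair (ne_of_apply_ne g hne)
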